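/- arXiv:math/0501325 — 4 statements merged into one kernel-verified Lean document; each statement's English description precedes it below -/
import Mathlib

section
/- Let L be an ℵ₀-complete, ℵ₀-upper continuous, and ℵ₀-lower continuous lattice with least element 0. Let (aₙ)ₙ<ω be a sequence of elements of L and let c ∈ L be such that: (i) (⨆_{i<m} a_i) ⊓ (⨆_{j<ω} a_{m+j}) = 0 for all m < ω (where ⨆_{i<0} a_i = 0); (ii) a₀ ≤ (⨆_{j<ω} a_{m+j}) ⊔ c for all m < ω; (iii) a₀ ⊓ c = 0. Then a₀ = 0. -/
/-- A lattice is `ℵ₀`-complete: every nonempty countable subset has a least upper bound and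
a greatest lower bound. -/
def Aleph0Complete (α : Type*) [Lattice α] : Prop :=
  ∀ X : Set α, X.Nonempty → X.Countable → (∃ u : α, IsLUB X u) ∧ (∃ m : α, IsGLB X m)

/-- A lattice is `ℵ₀`-lower continuous. -/
def Aleph0LowerContinuous (α : Type*) [Lattice α] : Prop :=
  ∀ (a : α) (X : Set α) (m : α), X.Nonempty → X.Countable → DirectedOn (· ≥ ·) X →
    IsGLB X m → IsGLB ((fun x => a ⊔ x) '' X) (a ⊔ m)

/-- A lattice is `ℵ₀`-upper continuous. -/
def Aleph0UpperContinuous (α : Type*) [Lattice α] : Prop :=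
  ∀ (a : α) (X : Set α) (u : α), X.Nonempty → X.Countable → DirectedOn (· ≤ ·) X →
    IsLUB X u → IsLUB ((fun x => a ⊓ x) '' X) (a ⊓ u)

/-- Let `L` be an `ℵ₀`-complete, `ℵ₀`-upper continuous, `ℵ₀`-lower continuous lattice with
zero, `(aₙ)` a sequence in `L`, `c ∈ L`, and `b m = ⨆_{j<ω} a_{m+j}`. If
`(⨆_{i<m} a_i) ⊓ (⨆_{j<ω} a_{m+j}) = 0` and `a₀ ≤ (⨆_{j<ω} a_{m+j}) ⊔ c` for all `m`, and
`a₀ ⊓ c = 0`, then `a₀ = 0`. -/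
theorem eq_bot_of_sequence {L : Type*} [Lattice L] [OrderBot L]
    (hC : Aleph0Complete L) (hUC : Aleph0UpperContinuous L) (hLC : Aleph0LowerContinuous L)
    (a : ℕ → L) (c : L) (b : ℕ → L)
    (hb : ∀ m, IsLUB (Set.range fun j => a (m + j)) (b m))
    (h1 : ∀ m, (Finset.range m).sup a ⊓ b m = ⊥)
    (h2 : ∀ m, a 0 ≤ b m ⊔ c)
    (h3 : a 0 ⊓ c = ⊥) : a 0 = ⊥ := by

  -- b is antitone
  have hmono : ∀ {n m : ℕ}, n ≤ m → b m ≤ b n := by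
    intro n m hnm
    refine (hb m).2 ?_
    rintro x ⟨j, rfl⟩
    show a (m + j) ≤ b n
    have heq : a (m + j) = a (n + ((m - n) + j)) := by congr 1; omega
    rw [heq]
    exact (hb n).1 ⟨(m - n) + j, rfl⟩
  -- the set X = range b
  set X : Set L := Set.range b with hX
  have hXne : X.Nonempty := ⟨b 0, ⟨0, rfl⟩⟩
  have hXct : X.Countable := Set.countable_range b
  have hXdir : DirectedOn (· ≥ ·) X := by
    rintro _ ⟨i, rfl⟩ _ ⟨j, rfl⟩
    exact ⟨b (max i j), ⟨max i j, rfl⟩, hmono (le_max_left i j), hmono (le_max_right i j)⟩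
  obtain ⟨d, hd⟩ := (hC X hXne hXct).2
  have hdle : ∀ m, d ≤ b m := fun m => hd.1 ⟨m, rfl⟩
  -- S = range of partial sups
  set s : ℕ → L := fun m => (Finset.range m).sup a with hs
  set S : Set L := Set.range s with hS
  have hsmono : Monotone s := fun n m h => Finset.sup_mono (Finset.range_subset_range.2 h)
  have hSlub : IsLUB S (b 0) := by
    constructor
    · rintro _ ⟨m, rfl⟩
      refine Finset.sup_le fun i _ => ?_
      exact (hb 0).1 ⟨i, by simp⟩
    · intro u hu
      refine (hb 0).2 ?_
      rintro _ ⟨j, rfl⟩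
      have h1 : a (0 + j) ≤ s (j + 1) := by
        simp only [hs]
        exact Finset.le_sup (by simp)
      exact h1.trans (hu ⟨j + 1, rfl⟩)
  have hd0 : d = ⊥ := by
    have hglb := hUC d S (b 0) ⟨s 0, ⟨0, rfl⟩⟩ (Set.countable_range s)
      (by rintro _ ⟨i, rfl⟩ _ ⟨j, rfl⟩
          exact ⟨s (max i j), ⟨max i j, rfl⟩, hsmono (le_max_left i j), hsmono (le_max_right i j)⟩)
      hSlub
    have hub : d ⊓ b 0 ≤ ⊥ := by
      refine hglb.2 ?_
      rintro _ ⟨_, ⟨m, rfl⟩, rfl⟩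
      calc d ⊓ s m ≤ s m ⊓ b m := by
            rw [inf_comm]; exact inf_le_inf_left _ (hdle m)
        _ = ⊥ := h1 m
    have : d ⊓ b 0 = d := inf_eq_left.2 (hdle 0)
    exact le_bot_iff.1 (this ▸ hub)
  -- lower continuity
  have hglb2 := hLC c X d hXne hXct hXdir hd
  rw [hd0, sup_bot_eq] at hglb2
  have ha0c : a 0 ≤ c := by
    refine hglb2.2 ?_
    rintro _ ⟨_, ⟨m, rfl⟩, rfl⟩
    exact (h2 m).trans (by rw [sup_comm])
  calc a 0 = a 0 ⊓ c := (inf_eq_left.2 ha0c).symm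
    _ = ⊥ := h3
end

section
/- Let L be a lattice with least element 0, let (aₙ)ₙ<ω be a sequence of elements of L with a₀ ≠ 0, and let c ∈ L be such that: (i) (⨆_{i<m} a_i) ⊓ (⨆_{j<n} a_{m+j}) = 0 for all m, n < ω (finite joins, with the empty join equal to 0); (ii) for every m < ω there exists n < ω such that a₀ ≤ (⨆_{j<n} a_{m+j}) ⊔ c; (iii) a₀ ⊓ c = 0. Then there is no lattice embedding of L into any ℵ₀-complete, ℵ₀-upper continuous, and ℵ₀-lower continuous lattice. -/
/-- A lattice embedding: an injective map preserving finite joins and meets. -/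
def IsLatEmbedding {α β : Type*} [Lattice α] [Lattice β] (f : α → β) : Prop :=
  Function.Injective f ∧ (∀ a b : α, f (a ⊔ b) = f a ⊔ f b) ∧
    ∀ a b : α, f (a ⊓ b) = f a ⊓ f b

/-- Tail finite joins. -/
private def Jt {L : Type*} [Lattice L] [OrderBot L] (a : ℕ → L) (m n : ℕ) : L :=
  (Finset.range n).sup (fun j => a (m + j))


/-- Let `L` be a lattice with zero, `(aₙ)` a sequence in `L` with `a₀ ≠ 0`, and `c ∈ L`,
such that (i) `(⨆_{i<m} a_i) ⊓ (⨆_{j<n} a_{m+j}) = 0` for all `m n`; (ii) for all `m` there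
is `n` with `a₀ ≤ (⨆_{j<n} a_{m+j}) ⊔ c`; (iii) `a₀ ⊓ c = 0`. Then `L` has no lattice
embedding into any `ℵ₀`-complete, `ℵ₀`-upper continuous, `ℵ₀`-lower continuous lattice. -/
theorem no_embedding_of_sequence {L : Type*} [Lattice L] [OrderBot L]
    (a : ℕ → L) (c : L) (ha0 : a 0 ≠ ⊥)
    (h1 : ∀ m n : ℕ, (Finset.range m).sup a ⊓ (Finset.range n).sup (fun j => a (m + j)) = ⊥)
    (h2 : ∀ m : ℕ, ∃ n : ℕ, a 0 ≤ (Finset.range n).sup (fun j => a (m + j)) ⊔ c)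
    (h3 : a 0 ⊓ c = ⊥) :
    ∀ (M : Type*) [Lattice M], Aleph0Complete M → Aleph0UpperContinuous M →
      Aleph0LowerContinuous M → ¬ ∃ f : L → M, IsLatEmbedding f := by
  rintro M _ hcomp hupper hlower ⟨f, hinj, hsup, hinf⟩
  have fmono : Monotone f := by
    intro x y hxy
    have h : f (x ⊓ y) = f x ⊓ f y := hinf x y
    rw [inf_eq_left.mpr hxy] at h
    calc f x = f x ⊓ f y := h
    _ ≤ f y := inf_le_right
  set z := f ⊥ with hz
  -- basic facts about Jt
  have Jmono : ∀ m, Monotone (Jt a m) := fun m n n' h =>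
    Finset.sup_mono (Finset.range_subset_range.mpr h)
  have Jshift : ∀ m n, Jt a (m + 1) n ≤ Jt a m (n + 1) := by
    intro m n
    refine Finset.sup_le fun j hj => ?_
    rw [show m + 1 + j = m + (j + 1) by omega]
    exact Finset.le_sup (f := fun j => a (m + j)) (Finset.mem_range.mpr (by
      exact Nat.succ_lt_succ (Finset.mem_range.mp hj)))
  have hJ00 : ∀ m, Jt a m 0 = ⊥ := fun m => by
    show (Finset.range 0).sup (fun j => a (m + j)) = ⊥
    simp
  have hJ0m : ∀ m, Jt a 0 m = (Finset.range m).sup a := fun m =>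
    Finset.sup_congr rfl (fun j _ => by rw [Nat.zero_add])
  -- the sets S m and their LUBs t m
  set S : ℕ → Set M := fun m => Set.range (fun n => f (Jt a m n)) with hS
  have hSne : ∀ m, (S m).Nonempty := fun m => ⟨_, ⟨0, rfl⟩⟩
  have hSct : ∀ m, (S m).Countable := fun m => Set.countable_range _
  have hSdir : ∀ m, DirectedOn (· ≤ ·) (S m) := fun m =>
    directedOn_range.mpr ((fmono.comp (Jmono m)).directed_le)
  have hex : ∀ m, ∃ u, IsLUB (S m) u := fun m => (hcomp (S m) (hSne m) (hSct m)).1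
  choose t ht using hex
  have hzt : ∀ m, z ≤ t m := fun m => (ht m).1 ⟨0, by show f (Jt a m 0) = z; rw [hJ00]⟩
  have tsucc : ∀ m, t (m + 1) ≤ t m := by
    intro m
    refine (ht (m + 1)).2 ?_
    rintro x ⟨n, rfl⟩
    exact le_trans (fmono (Jshift m n)) ((ht m).1 ⟨n + 1, rfl⟩)
  have tanti : Antitone t := antitone_nat_of_succ_le tsucc
  -- the GLB τ of the t m
  obtain ⟨τ, hτ⟩ := (hcomp (Set.range t) ⟨_, ⟨0, rfl⟩⟩ (Set.countable_range _)).2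
  have hτle : ∀ m, τ ≤ t m := fun m => hτ.1 ⟨m, rfl⟩
  have hzτ : z ≤ τ := hτ.2 (by rintro x ⟨m, rfl⟩; exact hzt m)
  -- key disjointness: f (Jt a 0 m) ⊓ t m = z
  have hA : ∀ m, f (Jt a 0 m) ⊓ t m = z := by
    intro m
    have hlub := hupper (f (Jt a 0 m)) (S m) (t m) (hSne m) (hSct m) (hSdir m) (ht m)
    have himg : (fun x => f (Jt a 0 m) ⊓ x) '' S m = {z} := by
      refine Set.eq_singleton_iff_unique_mem.mpr ⟨⟨f (Jt a m 0), ⟨0, rfl⟩, ?_⟩, ?_⟩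
      · show f (Jt a 0 m) ⊓ f (Jt a m 0) = z
        rw [← hinf, hJ00, inf_bot_eq]
      · rintro x ⟨y, ⟨n, rfl⟩, rfl⟩
        show f (Jt a 0 m) ⊓ f (Jt a m n) = z
        rw [← hinf]
        congr 1
        rw [hJ0m]
        exact h1 m n
    rw [himg] at hlub
    exact hlub.unique isLUB_singleton
  have hB : ∀ m, τ ⊓ f (Jt a 0 m) = z := by
    intro m
    refine le_antisymm ?_ (le_inf hzτ (fmono bot_le))
    calc τ ⊓ f (Jt a 0 m) ≤ t m ⊓ f (Jt a 0 m) := inf_le_inf_right _ (hτle m)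
    _ = f (Jt a 0 m) ⊓ t m := inf_comm _ _
    _ = z := hA m
  -- upper continuity forces τ = z
  have hτz : τ = z := by
    have hlub := hupper τ (S 0) (t 0) (hSne 0) (hSct 0) (hSdir 0) (ht 0)
    have himg : (fun x => τ ⊓ x) '' S 0 = {z} := by
      refine Set.eq_singleton_iff_unique_mem.mpr ⟨⟨f (Jt a 0 0), ⟨0, rfl⟩, ?_⟩, ?_⟩
      · show τ ⊓ f (Jt a 0 0) = z
        exact hB 0
      · rintro x ⟨y, ⟨n, rfl⟩, rfl⟩
        show τ ⊓ f (Jt a 0 n) = z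
        exact hB n
    rw [himg] at hlub
    have : τ ⊓ t 0 = z := hlub.unique isLUB_singleton
    rw [← this, inf_eq_left.mpr (hτle 0)]
  -- lower continuity: f a₀ ≤ f c ⊔ τ = f c
  have hTdir : DirectedOn (· ≥ ·) (Set.range t) := directedOn_range.mpr tanti.directed_ge
  have hglb := hlower (f c) (Set.range t) τ ⟨_, ⟨0, rfl⟩⟩ (Set.countable_range _) hTdir hτ
  have hfa0 : f (a 0) ≤ f c ⊔ τ := by
    refine hglb.2 ?_
    rintro x ⟨y, ⟨m, rfl⟩, rfl⟩
    show f (a 0) ≤ f c ⊔ t m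
    obtain ⟨n, hn⟩ := h2 m
    calc f (a 0) ≤ f ((Finset.range n).sup (fun j => a (m + j)) ⊔ c) := fmono hn
    _ = f (Jt a m n) ⊔ f c := hsup _ _
    _ ≤ t m ⊔ f c := sup_le_sup_right ((ht m).1 ⟨n, rfl⟩) _
    _ = f c ⊔ t m := sup_comm _ _
  rw [hτz, hz, ← hsup, sup_bot_eq] at hfa0
  -- conclude a₀ ≤ c, hence a₀ = ⊥
  have : a 0 ⊓ c = a 0 := hinj (by rw [hinf, inf_eq_left.mpr hfa0])
  rw [h3] at this
  exact ha0 this.symm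
end

section
/- Let L be a modular lattice with least element 0 containing a sequence (aₙ)ₙ<ω of nonzero elements that is independent (for all finite subsets X, Y of ω, (⨆_{i∈X} a_i) ⊓ (⨆_{i∈Y} a_i) = ⨆_{i∈X∩Y} a_i, with the empty join equal to 0) and pairwise perspective (for all m, n < ω there exists c ∈ L with a_m ⊔ c = a_n ⊔ c and a_m ⊓ c = a_n ⊓ c = 0). Then there is no lattice embedding of L into any ℵ₀-complete, ℵ₀-upper continuous, and ℵ₀-lower continuous lattice. -/
set_option linter.unusedSectionVars false


section AuxLemmas

variable {L : Type*} [Lattice L] [IsModularLattice L] [OrderBot L]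

private lemma indep_aux1 (a : ℕ → L)
    (hind : ∀ X Y : Finset ℕ, X.sup a ⊓ Y.sup a = (X ∩ Y).sup a) (m : ℕ) :
    (Finset.range (m + 1)).sup a ⊓ (a 0 ⊔ a (m + 1)) = a 0 := by
  have h2 : ({0, m + 1} : Finset ℕ).sup a = a 0 ⊔ a (m + 1) := by
    simp
  have h3 : Finset.range (m + 1) ∩ ({0, m + 1} : Finset ℕ) = {0} := by
    ext k
    simp only [Finset.mem_inter, Finset.mem_range, Finset.mem_insert, Finset.mem_singleton]
    omega
  have h := hind (Finset.range (m + 1)) {0, m + 1}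
  rw [h2, h3, Finset.sup_singleton] at h
  exact h

private lemma indep_aux2 (a : ℕ → L)
    (hind : ∀ X Y : Finset ℕ, X.sup a ⊓ Y.sup a = (X ∩ Y).sup a) (m : ℕ) :
    a 0 ⊓ (Finset.Icc 1 m).sup a = ⊥ := by
  have h3 : ({0} : Finset ℕ) ∩ Finset.Icc 1 m = ∅ := by
    ext k
    simp only [Finset.mem_inter, Finset.mem_singleton, Finset.mem_Icc,
      Finset.notMem_empty, iff_false]
    omega
  have h := hind {0} (Finset.Icc 1 m)
  rw [Finset.sup_singleton, h3, Finset.sup_empty] at h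
  exact h

private lemma chain_le (a c : ℕ → L) (hcle : ∀ j, c j ≤ a 0 ⊔ a j) (j m : ℕ) :
    (Finset.Icc j m).sup c ≤ (Finset.range (m + 1)).sup a := by
  apply Finset.sup_le
  intro k hk
  simp only [Finset.mem_Icc] at hk
  refine (hcle k).trans (sup_le ?_ ?_)
  · exact Finset.le_sup (Finset.mem_range.mpr (by omega))
  · exact Finset.le_sup (Finset.mem_range.mpr (by omega))

/-- Key modular-lattice lemma: the join of axes `c j ⊔ ... ⊔ c m` meets
`a 0 ⊔ ... ⊔ a n` trivially when `n < j`. -/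
private lemma lemA (a c : ℕ → L)
    (hind : ∀ X Y : Finset ℕ, X.sup a ⊓ Y.sup a = (X ∩ Y).sup a)
    (hcle : ∀ j, c j ≤ a 0 ⊔ a j) (hcm : ∀ j, a 0 ⊓ c j = ⊥) :
    ∀ m n j, n < j → (Finset.range (n + 1)).sup a ⊓ (Finset.Icc j m).sup c = ⊥ := by
  intro m
  induction m with
  | zero =>
    intro n j hnj
    have he : Finset.Icc j 0 = ∅ := Finset.Icc_eq_empty (by omega)
    simp [he]
  | succ m ih =>
    intro n j hnj
    by_cases hj : j ≤ m + 1
    · have hIcc : Finset.Icc j (m + 1) = insert (m + 1) (Finset.Icc j m) := by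
        ext k
        simp only [Finset.mem_Icc, Finset.mem_insert]
        omega
      rw [hIcc, Finset.sup_insert]
      have hsn : (Finset.range (n + 1)).sup a ≤ (Finset.range (m + 1)).sup a :=
        Finset.sup_mono (Finset.range_subset_range.mpr (by omega))
      have hhle : (Finset.Icc j m).sup c ≤ (Finset.range (m + 1)).sup a :=
        chain_le a c hcle j m
      have hcs : c (m + 1) ⊓ (Finset.range (m + 1)).sup a = ⊥ := by
        calc c (m + 1) ⊓ (Finset.range (m + 1)).sup a
            = (c (m + 1) ⊓ (a 0 ⊔ a (m + 1))) ⊓ (Finset.range (m + 1)).sup a := by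
              rw [inf_eq_left.mpr (hcle (m + 1))]
          _ = c (m + 1) ⊓ ((Finset.range (m + 1)).sup a ⊓ (a 0 ⊔ a (m + 1))) := by
              rw [inf_assoc, inf_comm (a 0 ⊔ a (m + 1)) _]
          _ = c (m + 1) ⊓ a 0 := by rw [indep_aux1 a hind m]
          _ = ⊥ := by rw [inf_comm]; exact hcm (m + 1)
      have e2 : (Finset.range (n + 1)).sup a ⊓ (c (m + 1) ⊔ (Finset.Icc j m).sup c)
          = (Finset.range (n + 1)).sup a
            ⊓ ((c (m + 1) ⊔ (Finset.Icc j m).sup c) ⊓ (Finset.range (m + 1)).sup a) := by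
        rw [inf_comm (c (m + 1) ⊔ (Finset.Icc j m).sup c) _, ← inf_assoc,
          inf_eq_left.mpr hsn]
      rw [e2, sup_comm (c (m + 1)) _, sup_inf_assoc_of_le _ hhle, hcs, sup_bot_eq]
      exact ih n j hnj
    · have he : Finset.Icc j (m + 1) = ∅ := Finset.Icc_eq_empty (by omega)
      simp [he]

private lemma lemB (a c : ℕ → L) (hcj : ∀ j, a j ⊔ c j = a 0 ⊔ a j) (j m : ℕ)
    (h1 : 1 ≤ j) (h2 : j ≤ m) :
    (Finset.range (m + 1)).sup a ≤ (Finset.Icc 1 m).sup a ⊔ (Finset.Icc j m).sup c := by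
  have haj : a j ⊔ c j ≤ (Finset.Icc 1 m).sup a ⊔ (Finset.Icc j m).sup c := by
    apply sup_le
    · exact le_sup_of_le_left (Finset.le_sup (Finset.mem_Icc.mpr ⟨h1, h2⟩))
    · exact le_sup_of_le_right (Finset.le_sup (Finset.mem_Icc.mpr ⟨le_refl j, h2⟩))
  apply Finset.sup_le
  intro k hk
  simp only [Finset.mem_range] at hk
  by_cases hk0 : k = 0
  · subst hk0
    have : a 0 ≤ a j ⊔ c j := by rw [hcj j]; exact le_sup_left
    exact this.trans haj
  · exact le_sup_of_le_left (Finset.le_sup (Finset.mem_Icc.mpr ⟨by omega, by omega⟩))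

end AuxLemmas

/-- Let `L` be a modular lattice with zero containing an independent sequence of nonzero,
pairwise perspective elements. Then `L` has no lattice embedding into any `ℵ₀`-complete,
`ℵ₀`-upper continuous, `ℵ₀`-lower continuous lattice. -/
theorem no_embedding_of_independent_perspective {L : Type*} [Lattice L]
    [IsModularLattice L] [OrderBot L]
    (a : ℕ → L) (hnz : ∀ n, a n ≠ ⊥)
    (hind : ∀ X Y : Finset ℕ, X.sup a ⊓ Y.sup a = (X ∩ Y).sup a)
    (hpersp : ∀ m n : ℕ, ∃ c : L, a m ⊔ c = a n ⊔ c ∧ a m ⊓ c = ⊥ ∧ a n ⊓ c = ⊥) :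
    ∀ (M : Type*) [Lattice M], Aleph0Complete M → Aleph0UpperContinuous M →
      Aleph0LowerContinuous M → ¬ ∃ f : L → M, IsLatEmbedding f := by
  intro M _ hC hUC hLC hf
  obtain ⟨f, finj, fsup, finf⟩ := hf
  -- basic facts about f
  have fmono : Monotone f := by
    intro x y hxy
    have h := fsup x y
    rw [sup_eq_right.mpr hxy] at h
    rw [h]
    exact le_sup_left
  -- choose and normalize the axes of perspectivity between `a 0` and `a j`
  choose c0 hc1 hc2 _ using fun j => hpersp 0 j
  set c : ℕ → L := fun j => c0 j ⊓ (a 0 ⊔ a j) with hcdef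
  have hcle : ∀ j, c j ≤ a 0 ⊔ a j := fun j => inf_le_right
  have hcm : ∀ j, a 0 ⊓ c j = ⊥ := by
    intro j
    have : a 0 ⊓ c j ≤ a 0 ⊓ c0 j := inf_le_inf_left _ inf_le_left
    exact le_bot_iff.mp (by rw [← hc2 j]; exact this)
  have hcj : ∀ j, a j ⊔ c j = a 0 ⊔ a j := by
    intro j
    have e1 : a j ⊔ c j = (a j ⊔ c0 j) ⊓ (a 0 ⊔ a j) := by
      rw [hcdef]
      exact (sup_inf_assoc_of_le (c0 j) le_sup_right).symm
    rw [e1, ← hc1 j]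
    exact inf_eq_right.mpr (sup_le (le_sup_left) (by rw [hc1 j]; exact le_sup_left))
  -- notation for the L-side elements
  set s : ℕ → L := fun n => (Finset.range (n + 1)).sup a with hsdef
  set tl : ℕ → L := fun m => (Finset.Icc 1 m).sup a with htldef
  set h : ℕ → ℕ → L := fun j m => (Finset.Icc j m).sup c with hhdef
  -- monotonicity facts
  have hsmono : Monotone s := fun i j hij =>
    Finset.sup_mono (Finset.range_subset_range.mpr (by omega))
  have htlmono : Monotone tl := fun i j hij =>
    Finset.sup_mono (Finset.Icc_subset_Icc le_rfl hij)
  have hhmono : ∀ j, Monotone (h j) := fun j i i' hii' =>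
    Finset.sup_mono (Finset.Icc_subset_Icc le_rfl hii')
  have hhs : ∀ j m, h j m ≤ s m := fun j m => chain_le a c hcle j m
  have htls : ∀ m, tl m ≤ s m := fun m =>
    Finset.sup_mono (fun k hk => by
      simp only [Finset.mem_Icc] at hk
      exact Finset.mem_range.mpr (by omega))
  -- directedness helpers
  have dirle : ∀ g : ℕ → M, Monotone g → DirectedOn (· ≤ ·) (Set.range g) := by
    rintro g hg _ ⟨i, rfl⟩ _ ⟨j, rfl⟩
    exact ⟨g (max i j), ⟨max i j, rfl⟩, hg (le_max_left i j), hg (le_max_right i j)⟩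
  have dirge : ∀ g : ℕ → M, Antitone g → DirectedOn (· ≥ ·) (Set.range g) := by
    rintro g hg _ ⟨i, rfl⟩ _ ⟨j, rfl⟩
    exact ⟨g (max i j), ⟨max i j, rfl⟩, hg (le_max_left i j), hg (le_max_right i j)⟩
  -- the big elements of M
  obtain ⟨U, hU⟩ := (hC (Set.range fun n => f (s n)) (Set.range_nonempty _)
    (Set.countable_range _)).1
  obtain ⟨T, hT⟩ := (hC (Set.range fun m => f (tl m)) (Set.range_nonempty _)
    (Set.countable_range _)).1
  choose Dj hDj using fun j => (hC (Set.range fun m => f (h (j + 1) m))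
    (Set.range_nonempty _) (Set.countable_range _)).1
  obtain ⟨D, hD⟩ := (hC (Set.range Dj) (Set.range_nonempty _) (Set.countable_range _)).2
  set z : M := f ⊥ with hzdef
  have hzle : ∀ x : L, z ≤ f x := fun x => fmono bot_le
  -- simple bounds
  have hTU : T ≤ U := by
    apply hT.2
    rintro _ ⟨m, rfl⟩
    exact (fmono (htls m)).trans (hU.1 ⟨m, rfl⟩)
  have hDjU : ∀ j, Dj j ≤ U := by
    intro j
    apply (hDj j).2
    rintro _ ⟨m, rfl⟩
    exact (fmono (hhs (j + 1) m)).trans (hU.1 ⟨m, rfl⟩)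
  have hDjanti : Antitone Dj := by
    apply antitone_nat_of_succ_le
    intro j
    apply (hDj (j + 1)).2
    rintro _ ⟨m, rfl⟩
    exact (fmono (Finset.sup_mono (Finset.Icc_subset_Icc (by omega) le_rfl))).trans
      ((hDj j).1 ⟨m, rfl⟩)
  have hzD : z ≤ D := by
    apply hD.2
    rintro _ ⟨j, rfl⟩
    exact (hzle (h (j + 1) 0)).trans ((hDj j).1 ⟨0, rfl⟩)
  -- Step 1: T ⊔ Dj j = U for all j
  have step1 : ∀ j, T ⊔ Dj j = U := by
    intro j
    apply le_antisymm (sup_le hTU (hDjU j))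
    apply hU.2
    rintro _ ⟨n, rfl⟩
    have hN : f (s n) ≤ f (tl (max n (j + 1)) ⊔ h (j + 1) (max n (j + 1))) := by
      apply fmono
      refine (hsmono (le_max_left n (j + 1))).trans ?_
      exact lemB a c hcj (j + 1) (max n (j + 1)) (by omega) (le_max_right n (j + 1))
    rw [fsup] at hN
    exact hN.trans (sup_le_sup (hT.1 ⟨_, rfl⟩) ((hDj j).1 ⟨_, rfl⟩))
  -- Step 2: lower continuity gives T ⊔ D = U
  have step2 : T ⊔ D = U := by
    have hglb := hLC T (Set.range Dj) D (Set.range_nonempty _) (Set.countable_range _)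
      (dirge Dj hDjanti) hD
    have himg : (fun x => T ⊔ x) '' Set.range Dj = {U} := by
      rw [← Set.range_comp]
      have : ((fun x => T ⊔ x) ∘ Dj) = fun _ => U := funext fun j => step1 j
      rw [this, Set.range_const]
    rw [himg] at hglb
    exact hglb.unique isGLB_singleton
  -- Step 3: D ⊓ f (s n) = z for all n
  have step3 : ∀ n, D ⊓ f (s n) = z := by
    intro n
    have hlub := hUC (f (s n)) (Set.range fun m => f (h (n + 1) m)) (Dj n)
      (Set.range_nonempty _) (Set.countable_range _)
      (dirle _ (fun i j hij => fmono (hhmono (n + 1) hij))) (hDj n)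
    have himg : (fun x => f (s n) ⊓ x) '' (Set.range fun m => f (h (n + 1) m)) = {z} := by
      rw [← Set.range_comp]
      have : ((fun x => f (s n) ⊓ x) ∘ fun m => f (h (n + 1) m)) = fun _ => z := by
        funext m
        show f (s n) ⊓ f (h (n + 1) m) = z
        rw [← finf, hzdef]
        congr 1
        exact lemA a c hind hcle hcm m n (n + 1) (by omega)
      rw [this, Set.range_const]
    rw [himg] at hlub
    have hfd : f (s n) ⊓ Dj n = z := hlub.unique isLUB_singleton
    apply le_antisymm
    · calc D ⊓ f (s n) ≤ Dj n ⊓ f (s n) :=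
            inf_le_inf_right _ (hD.1 ⟨n, rfl⟩)
        _ = z := by rw [inf_comm]; exact hfd
    · exact le_inf hzD (hzle _)
  -- Step 4: D = z
  have step4 : D = z := by
    have hlub := hUC D (Set.range fun n => f (s n)) U (Set.range_nonempty _)
      (Set.countable_range _) (dirle _ (fun i j hij => fmono (hsmono hij))) hU
    have himg : (fun x => D ⊓ x) '' (Set.range fun n => f (s n)) = {z} := by
      rw [← Set.range_comp]
      have : ((fun x => D ⊓ x) ∘ fun n => f (s n)) = fun _ => z := funext fun n => step3 n
      rw [this, Set.range_const]
    rw [himg] at hlub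
    have hDU : D ⊓ U = z := hlub.unique isLUB_singleton
    have hDleU : D ≤ U := (hD.1 ⟨0, rfl⟩).trans (hDjU 0)
    rw [← hDU]
    exact (inf_eq_left.mpr hDleU).symm
  -- Step 5: U = T
  have step5 : U = T := by
    rw [← step2, step4]
    exact sup_eq_left.mpr ((hzle (tl 0)).trans (hT.1 ⟨0, rfl⟩))
  -- Step 6: f (a 0) ⊓ T = z, hence contradiction
  have hlub := hUC (f (a 0)) (Set.range fun m => f (tl m)) T (Set.range_nonempty _)
    (Set.countable_range _) (dirle _ (fun i j hij => fmono (htlmono hij))) hT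
  have himg : (fun x => f (a 0) ⊓ x) '' (Set.range fun m => f (tl m)) = {z} := by
    rw [← Set.range_comp]
    have : ((fun x => f (a 0) ⊓ x) ∘ fun m => f (tl m)) = fun _ => z := by
      funext m
      show f (a 0) ⊓ f (tl m) = z
      rw [← finf, hzdef]
      congr 1
      exact indep_aux2 a hind m
    rw [this, Set.range_const]
  rw [himg] at hlub
  have hfa0T : f (a 0) ⊓ T = z := hlub.unique isLUB_singleton
  have hfa0U : f (a 0) ≤ U := by
    have : f (a 0) = f (s 0) := by
      rw [hsdef]
      congr 1
      simp
    rw [this]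
    exact hU.1 ⟨0, rfl⟩
  rw [step5] at hfa0U
  have : f (a 0) = f ⊥ := by
    rw [← hzdef, ← hfa0T]
    exact (inf_eq_left.mpr hfa0U).symm
  exact hnz 0 (finj this)
end

section
/- Let K be a division ring and let V be an infinite-dimensional K-vector space (V is not finitely generated over K). Then the complete lattice of all K-subspaces of V admits no lattice embedding into any ℵ₀-complete, ℵ₀-upper continuous, and ℵ₀-lower continuous lattice. -/
theorem no_embedding_of_subspace_lattice' {K V : Type*} [DivisionRing K] [AddCommGroup V]
    [Module K V] (hinf : ¬ Module.Finite K V) (M : Type*) [Lattice M]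
    (hcomp : ∀ X : Set M, X.Nonempty → X.Countable → (∃ u : M, IsLUB X u) ∧ (∃ m : M, IsGLB X m))
    (hupper : ∀ (a : M) (X : Set M) (u : M), X.Nonempty → X.Countable → DirectedOn (· ≤ ·) X →
      IsLUB X u → IsLUB ((fun x => a ⊓ x) '' X) (a ⊓ u))
    (hlower : ∀ (a : M) (X : Set M) (m : M), X.Nonempty → X.Countable → DirectedOn (· ≥ ·) X →
      IsGLB X m → IsGLB ((fun x => a ⊔ x) '' X) (a ⊔ m))
    (f : Submodule K V → M) (finj : Function.Injective f)
    (fsup : ∀ a b : Submodule K V, f (a ⊔ b) = f a ⊔ f b)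
    (finf : ∀ a b : Submodule K V, f (a ⊓ b) = f a ⊓ f b) : False := by
  -- f is monotone
  have hmono : ∀ {a b : Submodule K V}, a ≤ b → f a ≤ f b := by
    intro a b h
    have : f a ⊔ f b = f b := by rw [← fsup, sup_eq_right.mpr h]
    exact le_of_sup_eq this
  -- get a countable linearly independent family
  set b := Module.Basis.ofVectorSpace K V with hb
  haveI : Infinite (Module.Basis.ofVectorSpaceIndex K V) := by
    rw [← not_finite_iff_infinite]
    intro h
    exact hinf (Module.Finite.of_basis b)
  set g := Infinite.natEmbedding (Module.Basis.ofVectorSpaceIndex K V) with hg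
  set e : ℕ → V := fun n => b (g n) with he
  have hli : LinearIndependent K e := b.linearIndependent.comp g g.injective
  -- the subspaces
  set S : ℕ → Submodule K V := fun n => Submodule.span K (e '' Set.Iic n) with hS
  set T : ℕ → Submodule K V := fun n => Submodule.span K (e '' Set.Ici n) with hT
  set W : Submodule K V := Submodule.span K (Set.range e) with hW
  set D : Submodule K V := Submodule.span K (Set.range fun i => e i - e (i + 1)) with hD
  have heS : ∀ k, e k ∈ S k := fun k => Submodule.subset_span ⟨k, Set.mem_Iic.mpr le_rfl, rfl⟩
  have heT : ∀ k, e k ∈ T k := fun k => Submodule.subset_span ⟨k, Set.mem_Ici.mpr le_rfl, rfl⟩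
  have heW : ∀ k, e k ∈ W := fun k => Submodule.subset_span ⟨k, rfl⟩
  have hSmono : Monotone S := fun n m h =>
    Submodule.span_mono (Set.image_mono (Set.Iic_subset_Iic.mpr h))
  have hTanti : Antitone T := fun n m h =>
    Submodule.span_mono (Set.image_mono (Set.Ici_subset_Ici.mpr h))
  have hSW : ∀ n, S n ≤ W := fun n =>
    Submodule.span_le.mpr (by rintro v ⟨i, -, rfl⟩; exact heW i)
  have hTW : ∀ n, T n ≤ W := fun n =>
    Submodule.span_le.mpr (by rintro v ⟨i, -, rfl⟩; exact heW i)
  have hDW : D ≤ W := Submodule.span_le.mpr (by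
    rintro v ⟨i, rfl⟩
    exact sub_mem (heW i) (heW (i + 1)))
  -- S n ⊓ T (n+1) = ⊥
  have hST : ∀ n, S n ⊓ T (n + 1) = ⊥ := by
    intro n
    refine disjoint_iff.mp (hli.disjoint_span_image ?_)
    rw [Set.disjoint_left]
    intro i hi hi'
    exact absurd (lt_of_lt_of_le (Nat.lt_succ_of_le hi) hi') (lt_irrefl _)
  -- D ⊔ span {e k} = W
  have hDek : ∀ k, D ⊔ Submodule.span K {e k} = W := by
    intro k
    set P : Submodule K V := D ⊔ Submodule.span K {e k} with hP
    have hdiff : ∀ i, e i - e (i + 1) ∈ P :=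
      fun i => le_sup_left (α := Submodule K V) (Submodule.subset_span ⟨i, rfl⟩)
    have hiff : ∀ i, (e i ∈ P ↔ e (i + 1) ∈ P) := by
      intro i
      constructor
      · intro h
        have := sub_mem h (hdiff i)
        simpa using this
      · intro h
        have := add_mem (hdiff i) h
        simpa using this
    have h0 : ∀ i, (e i ∈ P ↔ e 0 ∈ P) := by
      intro i
      induction i with
      | zero => rfl
      | succ n ih => rw [← hiff n]; exact ih
    have hek : e k ∈ P := le_sup_right (α := Submodule K V)
      (Submodule.subset_span (Set.mem_singleton _))
    have hall : ∀ i, e i ∈ P := fun i => (h0 i).mpr ((h0 k).mp hek)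
    refine le_antisymm (sup_le hDW (Submodule.span_le.mpr ?_)) (Submodule.span_le.mpr ?_)
    · intro v hv
      rw [Set.mem_singleton_iff] at hv
      subst hv; exact heW k
    · rintro v ⟨i, rfl⟩; exact hall i
  -- e 0 ∉ D
  have he0D : e 0 ∉ D := by
    intro h
    have hker : D ≤ LinearMap.ker b.sumCoords := by
      rw [hD, Submodule.span_le]
      rintro v ⟨i, rfl⟩
      simp [LinearMap.mem_ker, he, map_sub]
    have h1 : b.sumCoords (e 0) = 0 := hker h
    rw [he] at h1
    simp [Module.Basis.sumCoords_self_apply] at h1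
  have hDneW : D ≠ W := fun h => he0D (h ▸ heW 0)
  -- M side
  set Xs : Set M := Set.range fun n => f (S n) with hXs
  have hXne : Xs.Nonempty := ⟨f (S 0), ⟨0, rfl⟩⟩
  have hXcnt : Xs.Countable := Set.countable_range _
  have hXdir : DirectedOn (· ≤ ·) Xs := by
    rintro x ⟨n, rfl⟩ y ⟨m, rfl⟩
    exact ⟨f (S (max n m)), ⟨max n m, rfl⟩, hmono (hSmono (le_max_left _ _)),
      hmono (hSmono (le_max_right _ _))⟩
  obtain ⟨u, hu⟩ := (hcomp Xs hXne hXcnt).1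
  have huS : ∀ n, f (S n) ≤ u := fun n => hu.1 ⟨n, rfl⟩
  set uk : ℕ → M := fun k => f (T k) ⊓ u with huk
  set Ys : Set M := Set.range uk with hYs
  have hYne : Ys.Nonempty := ⟨uk 0, ⟨0, rfl⟩⟩
  have hYcnt : Ys.Countable := Set.countable_range _
  have hYdir : DirectedOn (· ≥ ·) Ys := by
    rintro x ⟨n, rfl⟩ y ⟨m, rfl⟩
    exact ⟨uk (max n m), ⟨max n m, rfl⟩,
      inf_le_inf_right _ (hmono (hTanti (le_max_left _ _))),
      inf_le_inf_right _ (hmono (hTanti (le_max_right _ _)))⟩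
  obtain ⟨q, hq⟩ := (hcomp Ys hYne hYcnt).2
  have hquk : ∀ k, q ≤ uk k := fun k => hq.1 ⟨k, rfl⟩
  have hqu : q ≤ u := (hquk 0).trans inf_le_right
  have hbotq : f ⊥ ≤ q := hq.2 (by
    rintro x ⟨k, rfl⟩
    exact le_inf (hmono bot_le) ((hmono bot_le).trans (huS 0)))
  -- Step A : q = f ⊥
  have hqbot : q = f ⊥ := by
    have hA := hupper q Xs u hXne hXcnt hXdir hu
    have himg : (fun x => q ⊓ x) '' Xs = {f ⊥} := by
      have hval : ∀ n, q ⊓ f (S n) = f ⊥ := by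
        intro n
        refine le_antisymm ?_ (le_inf hbotq (hmono bot_le))
        calc q ⊓ f (S n) ≤ f (T (n + 1)) ⊓ f (S n) :=
              inf_le_inf_right _ ((hquk (n + 1)).trans inf_le_left)
          _ = f (T (n + 1) ⊓ S n) := (finf _ _).symm
          _ = f ⊥ := by rw [inf_comm, hST n]
      apply Set.eq_singleton_iff_nonempty_unique_mem.mpr
      refine ⟨⟨q ⊓ f (S 0), ⟨f (S 0), ⟨0, rfl⟩, rfl⟩⟩, ?_⟩
      · rintro y ⟨x, ⟨n, rfl⟩, rfl⟩
        exact hval n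
    rw [himg] at hA
    have : q ⊓ u = f ⊥ := hA.unique isLUB_singleton
    rw [← this, inf_eq_left.mpr hqu]
  -- Step B : f W ≤ f D
  have hB := hlower (f D) Ys q hYne hYcnt hYdir hq
  have hWlb : f W ∈ lowerBounds ((fun x => f D ⊔ x) '' Ys) := by
    rintro y ⟨x, ⟨k, rfl⟩, rfl⟩
    have h1 : f (Submodule.span K {e k}) ≤ uk k :=
      le_inf (hmono (Submodule.span_le.mpr (by
        intro v hv; rw [Set.mem_singleton_iff] at hv; subst hv; exact heT k)))
        ((hmono (Submodule.span_le.mpr (by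
          intro v hv; rw [Set.mem_singleton_iff] at hv; subst hv; exact heS k))).trans (huS k))
    calc f W = f (D ⊔ Submodule.span K {e k}) := by rw [hDek k]
      _ = f D ⊔ f (Submodule.span K {e k}) := fsup _ _
      _ ≤ f D ⊔ uk k := sup_le_sup_left h1 _
  have hWD : f W ≤ f D := by
    have := hB.2 hWlb
    rwa [hqbot, ← fsup, sup_bot_eq] at this
  exact hDneW (finj (le_antisymm (hmono hDW) hWD))

/-- The subspace lattice of an infinite-dimensional vector space over a division ring has no
lattice embedding into any `ℵ₀`-complete, `ℵ₀`-upper continuous, `ℵ₀`-lower continuous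
lattice. -/
theorem no_embedding_of_subspace_lattice {K V : Type*} [DivisionRing K] [AddCommGroup V]
    [Module K V] (hinf : ¬ Module.Finite K V) :
    ∀ (M : Type*) [Lattice M], Aleph0Complete M → Aleph0UpperContinuous M →
      Aleph0LowerContinuous M → ¬ ∃ f : Submodule K V → M, IsLatEmbedding f := by
  rintro M _ hcomp hupper hlower ⟨f, finj, fsup, finf⟩
  exact no_embedding_of_subspace_lattice' hinf M hcomp hupper hlower f finj fsup finf
end
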